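/- arXiv:2603.02460 — 2 statements merged into one kernel-verified Lean document; each statement's English description precedes it below -/
import Mathlib

section
/- Let E_1, ..., E_{n+1} be exchangeable real-valued random variables. Then for each k ∈ {1,...,n+1}, the probability that E_{n+1} is less than or equal to the k-th smallest value among E_1, ..., E_n, precisely P(E_{n+1} ≤ E_{(k)}), is at least k/(n+1), where E_{(k)} denotes the k-th order statistic of E_1, ..., E_n. -/
open MeasureTheory

/-- The `k`-th smallest value among `x 0, ..., x (n-1)` (for `1 ≤ k ≤ n`). -/
noncomputable def orderStat {n : ℕ} (x : Fin n → ℝ) (k : ℕ) : ℝ :=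
  sInf {t : ℝ | k ≤ (Finset.univ.filter (fun i => x i ≤ t)).card}

/-!
Call `j` *low* if fewer than `k` of the values lie strictly below `E j`. For any fixed
outcome at least `k` of the `n + 1` indices are low, and by exchangeability every index
is low with the same probability, so `E n` is low with probability at least `k / (n + 1)`.
If `E n` is low, fewer than `k` of `E 0, ..., E (n-1)` lie below it, so it is at most their
`k`-th order statistic.
-/

open Finset ENNReal

section Rank

variable {ι α : Type*} [Fintype ι] [LinearOrder α]

def strictRank (x : ι → α) (j : ι) : ℕ := #{i | x i < x j}

lemma strictRank_comp_perm (x : ι → α) (σ : Equiv.Perm ι) (j : ι) :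
    strictRank (fun i => x (σ i)) j = strictRank x (σ j) :=
  card_equiv σ (by simp)

lemma le_card_strictRank_lt (x : ι → α) {k : ℕ} (hk : k ≤ Fintype.card ι) :
    k ≤ #{j | strictRank x j < k} := by
  classical
  set J : Finset ι := {j | strictRank x j < k}
  by_cases hJ : J = univ
  · rwa [hJ, card_univ]
  -- a lowest coordinate outside `J` has only coordinates of `J` below it
  obtain ⟨j, hjJ, hmin⟩ := exists_min_image Jᶜ x (by simpa [nonempty_iff_ne_empty] using hJ)
  have hbelow : ({i | x i < x j} : Finset ι) ⊆ J := fun i hi => by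
    by_contra hiJ
    exact (mem_filter.mp hi).2.not_ge (hmin i (mem_compl.mpr hiJ))
  calc k ≤ strictRank x j := by simpa [J] using hjJ
    _ ≤ #J := card_le_card hbelow

end Rank

lemma le_orderStat_of_card_lt {n k : ℕ} (hkn : k ≤ n) (y : Fin n → ℝ) {a : ℝ}
    (h : #{i | y i < a} < k) : a ≤ orderStat y k := by
  obtain ⟨t, ht⟩ := (Set.finite_range y).bddAbove
  refine le_csInf ⟨t, ?_⟩ fun s hs => ?_
  · rwa [Set.mem_ofPred_eq, filter_true_of_mem fun i _ => ht ⟨i, rfl⟩, card_univ,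
      Fintype.card_fin]
  · by_contra! hsa
    have : #{i | y i ≤ s} ≤ #{i | y i < a} :=
      card_le_card (monotone_filter_right _ fun i _ hi => hi.trans_lt hsa)
    exact (hs.trans this).not_gt h

lemma card_filter_castSucc_le {n : ℕ} (p : Fin (n + 1) → Prop) [DecidablePred p] :
    #{i : Fin n | p i.castSucc} ≤ #{i | p i} :=
  card_le_card_of_injOn Fin.castSucc (fun i hi => by simpa using hi)
    (Fin.castSucc_injective n).injOn

section Exchangeable

variable {ι : Type*} [Fintype ι]

lemma measurable_strictRank (j : ι) : Measurable fun x : ι → ℝ => strictRank x j := by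
  simp_rw [strictRank, card_filter]
  exact Finset.measurable_sum _ fun i _ => Measurable.ite
    (measurableSet_lt (measurable_pi_apply i) (measurable_pi_apply j))
    measurable_const measurable_const

lemma measurableSet_strictRank_lt (j : ι) (k : ℕ) :
    MeasurableSet {x : ι → ℝ | strictRank x j < k} :=
  measurable_strictRank j measurableSet_Iio

lemma measure_strictRank_lt_comm {μ : Measure (ι → ℝ)}
    (hμ : ∀ σ : Equiv.Perm ι, μ.map (fun x i => x (σ i)) = μ) (k : ℕ) (j j' : ι) :
    μ {x | strictRank x j < k} = μ {x | strictRank x j' < k} := by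
  classical
  set σ := Equiv.swap j j'
  have hσ : Measurable fun (x : ι → ℝ) i => x (σ i) := by fun_prop
  calc μ {x | strictRank x j < k} = μ.map (fun x i => x (σ i)) {x | strictRank x j < k} := by
        rw [hμ]
    _ = μ {x | strictRank x j' < k} := by
        rw [Measure.map_apply hσ (measurableSet_strictRank_lt j k)]
        simp_rw [Set.preimage_ofPred_eq, strictRank_comp_perm, σ, Equiv.swap_apply_left]

lemma le_card_mul_measure_strictRank_lt {μ : Measure (ι → ℝ)} [IsProbabilityMeasure μ]
    (hμ : ∀ σ : Equiv.Perm ι, μ.map (fun x i => x (σ i)) = μ) {k : ℕ}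
    (hk : k ≤ Fintype.card ι) (j : ι) :
    (k : ℝ≥0∞) ≤ Fintype.card ι * μ {x | strictRank x j < k} := by
  calc (k : ℝ≥0∞) = ∫⁻ _, (k : ℝ≥0∞) ∂μ := by simp
    _ ≤ ∫⁻ x, ∑ j', {x | strictRank x j' < k}.indicator 1 x ∂μ := by
        refine lintegral_mono fun x => ?_
        simp_rw [Set.indicator_apply, Set.mem_ofPred_eq, Pi.one_apply, sum_boole]
        exact_mod_cast le_card_strictRank_lt x hk
    _ = ∑ j', μ {x | strictRank x j' < k} := by
        rw [lintegral_finsetSum _ fun j' _ =>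
          measurable_one.indicator (measurableSet_strictRank_lt j' k)]
        simp_rw [lintegral_indicator_one (measurableSet_strictRank_lt _ k)]
    _ = Fintype.card ι * μ {x | strictRank x j < k} := by
        simp [measure_strictRank_lt_comm hμ k _ j]

end Exchangeable

theorem exchangeable_rank_lemma_general
    {Ω : Type*} [MeasurableSpace Ω] (P : Measure Ω) [IsProbabilityMeasure P]
    (n : ℕ) (E : Fin (n + 1) → Ω → ℝ) (hE : ∀ i, Measurable (E i))
    (hexch : ∀ σ : Equiv.Perm (Fin (n + 1)),
      P.map (fun ω (i : Fin (n + 1)) => E (σ i) ω) =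
        P.map (fun ω (i : Fin (n + 1)) => E i ω))
    (k : ℕ) (hkn : k ≤ n) :
    (k : ENNReal) / ((n : ENNReal) + 1) ≤
      P {ω | E (Fin.last n) ω ≤ orderStat (fun i : Fin n => E i.castSucc ω) k} := by
  set X : Ω → Fin (n + 1) → ℝ := fun ω i => E i ω
  have hX : Measurable X := measurable_pi_lambda _ hE
  have hμ : ∀ σ : Equiv.Perm (Fin (n + 1)), (P.map X).map (fun x i => x (σ i)) = P.map X :=
    fun σ => by rw [Measure.map_map (by fun_prop) hX]; exact hexch σ
  have := Measure.isProbabilityMeasure_map (μ := P) hX.aemeasurable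
  have hcount := le_card_mul_measure_strictRank_lt hμ (by simpa using hkn.trans n.le_succ)
    (Fin.last n)
  calc (k : ℝ≥0∞) / (n + 1) ≤ P.map X {x | strictRank x (Fin.last n) < k} :=
        ENNReal.div_le_of_le_mul (by simpa [mul_comm] using hcount)
    _ = P (X ⁻¹' {x | strictRank x (Fin.last n) < k}) :=
        Measure.map_apply hX (measurableSet_strictRank_lt _ k)
    _ ≤ _ := measure_mono fun ω hω => le_orderStat_of_card_lt hkn _
        ((card_filter_castSucc_le _).trans_lt hω)

/-- Conformal rank lemma: for exchangeable real random variables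
`E 0, ..., E n`, the probability that the last one is at most the `k`-th order
statistic of the first `n` is at least `k / (n+1)`. -/
theorem exchangeable_rank_lemma
    {Ω : Type*} [MeasurableSpace Ω] (P : Measure Ω) [IsProbabilityMeasure P]
    (n : ℕ) (E : Fin (n + 1) → Ω → ℝ) (hE : ∀ i, Measurable (E i))
    (hexch : ∀ σ : Equiv.Perm (Fin (n + 1)),
      P.map (fun ω (i : Fin (n + 1)) => E (σ i) ω) =
        P.map (fun ω (i : Fin (n + 1)) => E i ω))
    (k : ℕ) (hk1 : 1 ≤ k) (hkn : k ≤ n) :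
    (k : ENNReal) / ((n : ENNReal) + 1) ≤
      P {ω | E (Fin.last n) ω ≤ orderStat (fun i : Fin n => E i.castSucc ω) k} :=
  exchangeable_rank_lemma_general P n E hE hexch k hkn
end

section
/- Weak isomorphism of finite uniform Z-networks of equal size is equivalent to permutation equivalence: for finite Z-networks (V_1, ω_1, μ_1) and (V_2, ω_2, μ_2) with |V_1| = |V_2| = n and uniform measures, G_1 is weakly isomorphic to G_2 if and only if there exists a permutation matrix P ∈ σ_n with ω_1 = Pᵀ ω_2 P (i.e., a bijection φ with ω_1(i, j) = ω_2(φ(i), φ(j)) for all i, j). -/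
open Finset

/-- Weak isomorphism of finite uniform Z-networks of size `n`: there is a
finite Z-network `(Fin N, ωW, c)` with full support and measure-preserving maps
onto both networks through which both relation functions pull back. -/
def WeakIso {Z : Type*} {n : ℕ} (ω₁ ω₂ : Fin n → Fin n → Z) : Prop :=
  ∃ (N : ℕ) (c : Fin N → ℝ) (ωW : Fin N → Fin N → Z)
    (φ₁ φ₂ : Fin N → Fin n),
    (∀ w, 0 < c w) ∧ (∑ w, c w = 1) ∧
    (∀ i : Fin n, ∑ w ∈ univ.filter (fun w => φ₁ w = i), c w = 1 / n) ∧
    (∀ i : Fin n, ∑ w ∈ univ.filter (fun w => φ₂ w = i), c w = 1 / n) ∧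
    (∀ w w', ωW w w' = ω₁ (φ₁ w) (φ₁ w') ∧ ωW w w' = ω₂ (φ₂ w) (φ₂ w'))

/-! The weights `c` couple the two uniform measures through `φ₁` and `φ₂`. The `φ₁`-preimage of a
set `s` of vertices has mass `|s|/n` and is contained in the `φ₂`-preimage of the set of vertices
it is coupled with, so Hall's condition holds and a perfect matching, i.e. a permutation `σ` with
`φ₁ w = i` and `φ₂ w = σ i` for some `w`, exists; along it the two pullbacks `ωW` agree.
Conversely the graph of a permutation, with uniform weights, is a common refinement. -/

section Coupling

variable {W α : Type*} [Fintype W] [DecidableEq α]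

lemma sum_filter_mem_eq_card_mul {c : W → ℝ} {φ : W → α} {m : ℝ}
    (hφ : ∀ i, ∑ w ∈ univ.filter (fun w => φ w = i), c w = m) (s : Finset α) :
    ∑ w ∈ univ.filter (fun w => φ w ∈ s), c w = s.card * m := by
  rw [← sum_fiberwise_eq_sum_filter univ s φ c, sum_congr rfl fun i _ => hφ i, sum_const,
    nsmul_eq_mul]

lemma exists_perm_of_fibers_eq [Fintype α] {c : W → ℝ} (hc : ∀ w, 0 ≤ c w) {m : ℝ} (hm : 0 < m)
    {φ₁ φ₂ : W → α} (h₁ : ∀ i, ∑ w ∈ univ.filter (fun w => φ₁ w = i), c w = m)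
    (h₂ : ∀ i, ∑ w ∈ univ.filter (fun w => φ₂ w = i), c w = m) :
    ∃ σ : Equiv.Perm α, ∀ i, ∃ w, φ₁ w = i ∧ φ₂ w = σ i := by
  set t : α → Finset α := fun i => (univ.filter (fun w => φ₁ w = i)).image φ₂
  have hall : ∀ s : Finset α, s.card ≤ (s.biUnion t).card := by
    intro s
    have hsub : univ.filter (fun w => φ₁ w ∈ s) ⊆ univ.filter (fun w => φ₂ w ∈ s.biUnion t) := by
      intro w hw
      simp only [mem_filter, mem_univ, true_and, t, mem_biUnion, mem_image] at hw ⊢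
      exact ⟨φ₁ w, hw, w, rfl, rfl⟩
    have hmass := sum_le_sum_of_subset_of_nonneg hsub fun w _ _ => hc w
    rw [sum_filter_mem_eq_card_mul h₁, sum_filter_mem_eq_card_mul h₂] at hmass
    exact_mod_cast le_of_mul_le_mul_right hmass hm
  obtain ⟨f, hf_inj, hf_mem⟩ := (all_card_le_biUnion_card_iff_exists_injective t).mp hall
  refine ⟨Equiv.ofBijective f (Finite.injective_iff_bijective.mp hf_inj), fun i => ?_⟩
  simpa [t, eq_comm] using hf_mem i

end Coupling

lemma exists_perm_of_weakIso {Z : Type*} {n : ℕ} (hn : 0 < n) {ω₁ ω₂ : Fin n → Fin n → Z}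
    (h : WeakIso ω₁ ω₂) : ∃ φ : Equiv.Perm (Fin n), ∀ i j, ω₁ i j = ω₂ (φ i) (φ j) := by
  obtain ⟨N, c, ωW, φ₁, φ₂, hc, -, h₁, h₂, hω⟩ := h
  obtain ⟨σ, hσ⟩ := exists_perm_of_fibers_eq (fun w => (hc w).le) (by positivity) h₁ h₂
  refine ⟨σ, fun i j => ?_⟩
  obtain ⟨w, rfl, hw⟩ := hσ i
  obtain ⟨w', rfl, hw'⟩ := hσ j
  rw [← hw, ← hw', ← (hω w w').1, (hω w w').2]

lemma weakIso_of_perm {Z : Type*} {n : ℕ} (hn : 0 < n) {ω₁ ω₂ : Fin n → Fin n → Z}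
    (φ : Equiv.Perm (Fin n)) (hφ : ∀ i j, ω₁ i j = ω₂ (φ i) (φ j)) : WeakIso ω₁ ω₂ := by
  have hfiber : ∀ i, univ.filter (fun w => φ w = i) = {φ.symm i} := fun i => by
    ext w
    simp [Equiv.eq_symm_apply]
  refine ⟨n, fun _ => 1 / n, ω₁, id, φ, fun _ => by positivity, ?_, fun i => ?_, fun i => ?_,
    fun w w' => ⟨rfl, hφ w w'⟩⟩
  · simp [hn.ne']
  · simp [filter_eq']
  · rw [hfiber, sum_singleton]

/-- Weak isomorphism of finite uniform Z-networks of equal size is equivalent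
to permutation equivalence of the relation functions. -/
theorem weakIso_iff_perm {Z : Type*} {n : ℕ} (hn : 0 < n)
    (ω₁ ω₂ : Fin n → Fin n → Z) :
    WeakIso ω₁ ω₂ ↔ ∃ φ : Equiv.Perm (Fin n), ∀ i j, ω₁ i j = ω₂ (φ i) (φ j) :=
  ⟨exists_perm_of_weakIso hn, fun ⟨φ, hφ⟩ => weakIso_of_perm hn φ hφ⟩
end
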